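/- In the game G_pos on a positive CNF formula, if Player 2 (who wants the formula false) has a winning strategy, then Player 2 has a winning strategy in which every variable Player 2 sets is set to False. -/
import Mathlib


/-- Evaluation of a positive CNF formula (a list of clauses of un-negated variables). -/
def PosEval {n : ℕ} (F : List (List (Fin n))) (σ : Fin n → Bool) : Prop :=
  ∀ c ∈ F, ∃ v ∈ c, σ v = true

/-- Player 2 (to move iff `turn = false`) has a winning strategy in G_pos:
players alternately assign previously unset variables, and Player 2 wins iff
the positive CNF formula `F` is false at the end. -/
def GposWin2 {n : ℕ} (F : List (List (Fin n))) :
    ℕ → Finset (Fin n) → (Fin n → Bool) → Bool → Prop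
  | 0, _, σ, _ => ¬ PosEval F σ
  | fuel + 1, unset, σ, false =>
      ∃ v ∈ unset, ∃ b : Bool,
        GposWin2 F fuel (unset.erase v) (Function.update σ v b) true
  | fuel + 1, unset, σ, true =>
      ∀ v ∈ unset, ∀ b : Bool,
        GposWin2 F fuel (unset.erase v) (Function.update σ v b) false

/-- As `GposWin2`, but Player 2 always sets the chosen variable to False. -/
def GposWin2False {n : ℕ} (F : List (List (Fin n))) :
    ℕ → Finset (Fin n) → (Fin n → Bool) → Bool → Prop
  | 0, _, σ, _ => ¬ PosEval F σ
  | fuel + 1, unset, σ, false =>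
      ∃ v ∈ unset,
        GposWin2False F fuel (unset.erase v) (Function.update σ v false) true
  | fuel + 1, unset, σ, true =>
      ∀ v ∈ unset, ∀ b : Bool,
        GposWin2False F fuel (unset.erase v) (Function.update σ v b) false


lemma gpos_mono {n : ℕ} (F : List (List (Fin n))) :
    ∀ (fuel : ℕ) (unset : Finset (Fin n)) (σ σ' : Fin n → Bool) (t : Bool),
    (∀ i, σ' i = true → σ i = true) →
    GposWin2 F fuel unset σ t → GposWin2False F fuel unset σ' t := by
  intro fuel
  induction fuel with
  | zero =>
    intro unset σ σ' t hle h hev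
    exact h (fun c hc => by
      obtain ⟨v, hv, hvt⟩ := hev c hc
      exact ⟨v, hv, hle v hvt⟩)
  | succ k ih =>
    intro unset σ σ' t hle h
    cases t with
    | false =>
      obtain ⟨v, hv, b, hw⟩ := h
      refine ⟨v, hv, ih _ _ _ _ (fun i hi => ?_) hw⟩
      by_cases hiv : i = v
      · subst hiv; simp [Function.update_self] at hi
      · rw [Function.update_of_ne hiv] at hi ⊢
        exact hle i hi
    | true =>
      intro v hv b
      refine ih _ _ _ _ (fun i hi => ?_) (h v hv b)
      by_cases hiv : i = v
      · subst hiv; simpa [Function.update_self] using hi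
      · rw [Function.update_of_ne hiv] at hi ⊢
        exact hle i hi

/-- If Player 2 has a winning strategy in G_pos, then Player 2 has a winning
strategy in which every variable Player 2 sets is set to False. -/
theorem gpos_player2_can_play_false {n : ℕ} (F : List (List (Fin n)))
    (h : GposWin2 F n Finset.univ (fun _ => false) true) :
    GposWin2False F n Finset.univ (fun _ => false) true := by
  exact gpos_mono F n Finset.univ _ _ true (fun i hi => hi) h
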